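/- arXiv:2509.14617 — 3 statements merged into one kernel-verified Lean document; each statement's English description precedes it below -/
import Mathlib

section
/- Let N be odd, and let S^(1),…,S^(N) be independent uniformly random hypervectors in {-1,+1}^D. Let C = [S^(1)+…+S^(N)] be their coordinatewise majority (the sum is never zero since N is odd). Then for each fixed n and each coordinate i, P(C_i ≠ S_i^(n)) = 1/2 − 2^{−N}·binom(N−1, (N−1)/2). -/
/-!
Only column `i` matters: the other columns factor out of both counts. Within the column, split
off the `n`-th vote. The remaining `N - 1 = 2m` votes have an even sum `s`. If `s = 0` the
majority is the `n`-th vote itself; otherwise it is the sign of `s`, and exactly one of the two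
values of the `n`-th vote disagrees with it. So the disagreeing columns number
`#{s ≠ 0} = 2 ^ (2m) - #{s = 0} = 2 ^ (2m) - choose (2m) m`.
-/

def pm (b : Bool) : ℤ := if b then 1 else -1

/-- Coordinatewise majority (sign of the sum) of N hypervectors; with N odd the sum
is never zero. -/
def maj {N D : ℕ} (S : Fin N → Fin D → ℤ) (i : Fin D) : ℤ :=
  if 0 < ∑ k, S k i then 1 else -1

open Finset

lemma card_filter_apply_div {ι β : Type*} [DecidableEq ι] [Fintype ι] [Fintype β]
    (P : β → Prop) [DecidablePred P] (i : ι) :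
    (#{f : ι → β | P (f i)} : ℝ) / Fintype.card (ι → β) = #{b | P b} / Fintype.card β := by
  rcases isEmpty_or_nonempty β with hβ | hβ
  · have : IsEmpty (ι → β) := ⟨fun f => isEmptyElim (f i)⟩
    simp
  have hfilter : #{f : ι → β | P (f i)} = #{b | P b} * Fintype.card ({j // j ≠ i} → β) := by
    rw [← Fintype.card_subtype, ← Fintype.card_subtype, ← Fintype.card_prod]
    exact Fintype.card_congr <|
      (Equiv.funSplitAt i β).subtypeEquiv (fun _ => Iff.rfl) |>.trans
        Equiv.prodSubtypeFstEquivSubtypeProd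
  have hpos : (0 : ℝ) < Fintype.card ({j // j ≠ i} → β) := by
    exact_mod_cast Fintype.card_pos
  rw [hfilter, Fintype.card_congr (Equiv.funSplitAt i β), Fintype.card_prod]
  push_cast
  exact mul_div_mul_right _ _ hpos.ne'

lemma sum_pm_eq {α : Type*} [Fintype α] (h : α → Bool) :
    ∑ k, pm (h k) = 2 * #{k | h k = true} - Fintype.card α := by
  have hpm : ∀ k, pm (h k) = 2 * (if h k = true then 1 else 0) - 1 := by
    intro k; cases h k <;> rfl
  rw [sum_congr rfl fun k _ => hpm k, sum_sub_distrib, ← mul_sum, card_filter]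
  simp

lemma card_filter_card_eq_true_eq_choose {α : Type*} [Fintype α] [DecidableEq α] (m : ℕ) :
    #{h : α → Bool | #({k | h k = true} : Finset α) = m} = (Fintype.card α).choose m := by
  rw [← card_univ, ← card_powersetCard m]
  refine card_nbij' (fun h => univ.filter fun k => h k = true) (fun s k => decide (k ∈ s)) ?_ ?_ ?_ ?_
  · intro h; simp
  · intro s; simp
  · intro h _; funext k; simp
  · intro s _; ext k; simp

lemma card_sum_pm_eq_zero {α : Type*} [Fintype α] [DecidableEq α] {m : ℕ}
    (hα : Fintype.card α = 2 * m) :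
    #{h : α → Bool | ∑ k, pm (h k) = 0} = (2 * m).choose m := by
  rw [← hα, ← card_filter_card_eq_true_eq_choose]
  congr 1
  refine filter_congr fun h _ => ?_
  rw [sum_pm_eq, hα]
  omega

lemma card_majority_ne_self (s : ℤ) (hs : Even s) :
    #{b : Bool | (if 0 < pm b + s then 1 else -1) ≠ pm b} = if s = 0 then 0 else 1 := by
  obtain ⟨t, rfl⟩ := hs
  rw [card_filter, Fintype.sum_bool]
  simp only [pm, if_true, Bool.false_eq_true, if_false]
  split_ifs <;> omega

lemma card_majority_ne_apply {α : Type*} [Fintype α] [DecidableEq α] (n : α) {m : ℕ}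
    (hα : Fintype.card α = 2 * m + 1) :
    #{g : α → Bool | (if 0 < ∑ k, pm (g k) then 1 else -1) ≠ pm (g n)}
      = 2 ^ (2 * m) - (2 * m).choose m := by
  have hrest : Fintype.card {k // k ≠ n} = 2 * m := by simp [Fintype.card_subtype_compl, hα]
  have hsplit : #{g : α → Bool | (if 0 < ∑ k, pm (g k) then 1 else -1) ≠ pm (g n)}
      = ∑ h : {k // k ≠ n} → Bool,
          #{b : Bool | (if 0 < pm b + ∑ k, pm (h k) then 1 else -1) ≠ pm b} := by
    simp only [card_filter]
    rw [Fintype.sum_equiv (Equiv.funSplitAt n Bool) _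
      (fun p => if (if 0 < pm p.1 + ∑ k, pm (p.2 k) then 1 else -1) ≠ pm p.1 then 1 else 0)
      fun g => by simp [Fintype.sum_eq_add_sum_subtype_ne _ n]]
    exact Fintype.sum_prod_type_right _
  have heven (h : {k // k ≠ n} → Bool) : Even (∑ k, pm (h k)) := by
    rw [sum_pm_eq, hrest]
    exact ⟨#{k | h k = true} - m, by push_cast; ring⟩
  have htotal := card_filter_add_card_filter_not (s := univ)
    fun h : {k // k ≠ n} → Bool => ∑ k, pm (h k) = 0
  rw [card_univ, Fintype.card_fun, Fintype.card_bool, hrest, card_sum_pm_eq_zero hrest] at htotal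
  rw [hsplit, Fintype.sum_congr _ _ fun h => card_majority_ne_self _ (heven h), sum_ite,
    sum_const_zero, zero_add, sum_const, smul_eq_mul, mul_one]
  omega

/-- For N odd and S^(1),…,S^(N) independent uniformly random hypervectors with
coordinatewise majority C, for each fixed n and coordinate i,
P(C_i ≠ S_i^(n)) = 1/2 − 2^{−N}·binom(N−1,(N−1)/2). -/
theorem stmt6 (N D : ℕ) (hN : Odd N) (n : Fin N) (i : Fin D) :
    ((Finset.univ.filter (fun f : Fin N → Fin D → Bool =>
        maj (fun k j => pm (f k j)) i ≠ pm (f n i))).card : ℝ)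
      / (Fintype.card (Fin N → Fin D → Bool) : ℝ)
    = 1/2 - (2 : ℝ) ^ (-(N : ℤ)) * (Nat.choose (N - 1) ((N - 1) / 2) : ℝ) := by
  obtain ⟨m, rfl⟩ := hN
  have hcolumn :
      #{f : Fin (2 * m + 1) → Fin D → Bool | maj (fun k j => pm (f k j)) i ≠ pm (f n i)}
        = #{F : Fin D → Fin (2 * m + 1) → Bool |
            (if 0 < ∑ k, pm (F i k) then 1 else -1) ≠ pm (F i n)} :=
    card_equiv (Equiv.piComm _) fun f => by simp [maj]
  rw [hcolumn, Fintype.card_congr (Equiv.piComm _),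
    card_filter_apply_div
      (fun g : Fin (2 * m + 1) → Bool => (if 0 < ∑ k, pm (g k) then 1 else -1) ≠ pm (g n)),
    card_majority_ne_apply n (Fintype.card_fin _), Nat.cast_sub (Nat.choose_le_two_pow _ _)]
  simp only [Fintype.card_fun, Fintype.card_bool, Fintype.card_fin, add_tsub_cancel_right,
    Nat.mul_div_cancel_left m two_pos, zpow_neg, zpow_natCast]
  push_cast
  field_simp
  ring
end

section
/- Let N be odd and S^(1),…,S^(N) be independent uniformly random hypervectors in {-1,+1}^D with coordinatewise majority C = [S^(1)+…+S^(N)]. Then d_H(C, S^(n)) is distributed as (1/D)·Binomial(D, 1/2 − p(N)) where p(N) = 2^{−N}·binom(N−1,(N−1)/2); in particular E[d_H(C, S^(n))] = 1/2 − p(N) < 1/2. -/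
noncomputable def hdist {D : ℕ} (A B : Fin D → ℤ) : ℝ :=
  ((Finset.univ.filter (fun i => A i ≠ B i)).card : ℝ) / D

/-!
Coordinates are independent, so everything reduces to one column `v = (S^(1)_i, …, S^(N)_i)`.
Write `N = 2r + 1` and let `s` be the number of `+1`s among the `2r` entries other than `v n`.
The majority differs from `v n` exactly when `s < r` (if `v n = +1`) or `s > r` (if `v n = -1`),
so the disagreeing columns are, up to the value of `v n`, the `w ∈ {±1}^{2r}` with `s(w) ≠ r`:
there are `2^{2r} - C(2r, r)` of them, a fraction `1/2 - p(N)` of all `2^N` columns.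
The number of disagreeing coordinates among `D` independent columns is then binomial, and its
mean follows by summing over coordinates.
-/

open Finset Fintype

section BinomialCount

variable {ι V : Type*} [Fintype ι] [DecidableEq ι] [Fintype V] (P : V → Prop) [DecidablePred P]

theorem card_subtype_ne (i : ι) : card {j // j ≠ i} = card ι - 1 := by
  simp [Fintype.card_subtype_compl]

theorem card_filter_filter_apply_eq (s : Finset ι) :
    #{g : ι → V | ({i | P (g i)} : Finset ι) = s}
      = #{v | P v} ^ #s * #{v | ¬P v} ^ (card ι - #s) := by
  have hpi : ({g : ι → V | ({i | P (g i)} : Finset ι) = s} : Finset (ι → V))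
      = piFinset fun i => if i ∈ s then ({v | P v} : Finset V) else ({v | ¬P v} : Finset V) := by
    ext g
    simp only [mem_filter, mem_univ, true_and, mem_piFinset, Finset.ext_iff]
    refine forall_congr' fun i => ?_
    by_cases hi : i ∈ s <;> simp [hi]
  rw [hpi, card_piFinset]
  simp [apply_ite, prod_ite, filter_not, card_univ_sdiff]

theorem card_filter_card_filter_apply_eq (m : ℕ) :
    #{g : ι → V | #{i | P (g i)} = m}
      = (card ι).choose m * #{v | P v} ^ m * #{v | ¬P v} ^ (card ι - m) := by
  rw [card_eq_sum_card_fiberwise (f := fun g : ι → V => ({i | P (g i)} : Finset ι))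
    (t := powersetCard m univ) (fun g hg => by simpa using hg)]
  have hfiber : ∀ s ∈ powersetCard m (univ : Finset ι),
      #{g ∈ ({g : ι → V | #{i | P (g i)} = m} : Finset _) | ({i | P (g i)} : Finset ι) = s}
        = #{v | P v} ^ m * #{v | ¬P v} ^ (card ι - m) := by
    intro s hs
    rw [mem_powersetCard] at hs
    rw [← hs.2, ← card_filter_filter_apply_eq, filter_filter]
    congr 1
    refine filter_congr fun g _ => ⟨And.right, fun h => ⟨by rw [h], h⟩⟩
  rw [sum_congr rfl hfiber, sum_const, card_powersetCard, card_univ, smul_eq_mul, mul_assoc]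

theorem card_filter_apply (i : ι) :
    #{g : ι → V | P (g i)} = #{v | P v} * card V ^ (card ι - 1) := by
  rw [Finset.card_equiv (Equiv.funSplitAt i V) (t := ({v | P v} : Finset V) ×ˢ univ) (by simp),
    card_product, card_univ, card_fun, card_subtype_ne]

theorem sum_card_filter_apply :
    ∑ g : ι → V, #{i | P (g i)} = card ι * (#{v | P v} * card V ^ (card ι - 1)) := by
  simp_rw [card_filter]
  rw [sum_comm]
  simp_rw [← card_filter, card_filter_apply, sum_const, card_univ, smul_eq_mul]

theorem card_filter_card_filter_apply_div [Nonempty V] (m : ℕ) :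
    (#{g : ι → V | #{i | P (g i)} = m} : ℝ) / card (ι → V)
      = (card ι).choose m * (#{v | P v} / card V : ℝ) ^ m
          * (1 - #{v | P v} / card V : ℝ) ^ (card ι - m) := by
  rcases lt_or_ge (card ι) m with hm | hm
  · simp [card_filter_card_filter_apply_eq, Nat.choose_eq_zero_of_lt hm]
  have hV : (card V : ℝ) ≠ 0 := by positivity
  have hcompl : (1 - #{v | P v} / card V : ℝ) = #{v | ¬P v} / card V := by
    rw [eq_div_iff hV, sub_mul, div_mul_cancel₀ _ hV, one_mul, ← card_univ (α := V),
      ← card_filter_add_card_filter_not P]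
    push_cast
    ring
  have hpow : (card V : ℝ) ^ card ι = card V ^ m * card V ^ (card ι - m) := by
    rw [← pow_add, Nat.add_sub_cancel' hm]
  rw [hcompl, card_filter_card_filter_apply_eq, card_fun]
  push_cast
  rw [hpow, div_pow, div_pow]
  field_simp

theorem sum_card_filter_apply_div [Nonempty V] :
    (∑ g : ι → V, (#{i | P (g i)} : ℝ)) / card (ι → V)
      = card ι * (#{v | P v} / card V : ℝ) := by
  rcases Nat.eq_zero_or_pos (card ι) with hι | hι
  · have : IsEmpty ι := Fintype.card_eq_zero_iff.mp hι
    simp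
  have hpow : (card V : ℝ) ^ card ι = card V ^ (card ι - 1) * card V := by
    rw [← pow_succ, Nat.sub_add_cancel hι]
  rw [← Nat.cast_sum, sum_card_filter_apply, card_fun]
  push_cast
  rw [hpow]
  field_simp

end BinomialCount

section Majority

variable {ι : Type*} [Fintype ι]

def MajorityDisagrees (n : ι) (v : ι → Bool) : Prop :=
  (if 0 < ∑ k, pm (v k) then (1 : ℤ) else -1) ≠ pm (v n)

instance (n : ι) : DecidablePred (MajorityDisagrees n) := fun _ => by
  unfold MajorityDisagrees; infer_instance

theorem sum_pm (v : ι → Bool) : ∑ k, pm (v k) = 2 * #{k | v k} - card ι := by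
  have hpm : ∀ k, pm (v k) = 2 * (if v k then 1 else 0) - 1 := fun k => by
    unfold pm; cases v k <;> simp
  rw [sum_congr rfl fun k _ => hpm k, sum_sub_distrib, ← mul_sum, sum_boole]
  simp

variable [DecidableEq ι]

theorem card_filter_eq_ite_add (v : ι → Bool) (n : ι) :
    #{k | v k} = (if v n then 1 else 0) + #{j : {j // j ≠ n} | v j} := by
  simp_rw [card_filter]
  exact Fintype.sum_eq_add_sum_subtype_ne _ n

theorem majorityDisagrees_iff {r : ℕ} (hι : card ι = 2 * r + 1) (n : ι) (v : ι → Bool) :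
    MajorityDisagrees n v ↔
      if v n then #{j : {j // j ≠ n} | v j} < r else r < #{j : {j // j ≠ n} | v j} := by
  rw [MajorityDisagrees, sum_pm, card_filter_eq_ite_add v n, hι]
  cases v n <;> simp [pm] <;> omega

theorem card_majorityDisagrees_add_choose {r : ℕ} (hι : card ι = 2 * r + 1) (n : ι) :
    #{v | MajorityDisagrees n v} + (2 * r).choose r = 2 ^ (2 * r) := by
  set s : ({j // j ≠ n} → Bool) → ℕ := fun w => #{j | w j}
  have hsplit : #{v | MajorityDisagrees n v} = #{w | s w < r} + #{w | r < s w} := by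
    rw [Finset.card_equiv (Equiv.funSplitAt n Bool)
      (t := {x | if x.1 then s x.2 < r else r < s x.2}) (by simp [majorityDisagrees_iff hι, s])]
    simp_rw [card_filter, Fintype.sum_prod_type, Fintype.sum_bool, if_true, Bool.false_eq_true,
      if_false]
  have hcentral : #{w | s w = r} = (2 * r).choose r := by
    simpa [s, card_subtype_ne, hι, filter_insert, filter_singleton] using
      card_filter_card_filter_apply_eq (ι := {j // j ≠ n}) (· = true) r
  have htotal : #{w | s w < r} + #{w | r < s w} + #{w | s w = r} = 2 ^ (2 * r) := by
    have hone : ∀ w, (if s w < r then 1 else 0) + (if r < s w then 1 else 0)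
        + (if s w = r then 1 else 0) = 1 := fun w => by split_ifs <;> omega
    simp_rw [card_filter, ← sum_add_distrib, hone]
    simp [hι]
  rw [hsplit, ← hcentral, htotal]

theorem card_majorityDisagrees_div (hι : Odd (card ι)) (n : ι) :
    (#{v | MajorityDisagrees n v} : ℝ) / card (ι → Bool)
      = 1 / 2 - 2 ^ (-(card ι : ℤ)) * ((card ι - 1).choose ((card ι - 1) / 2) : ℝ) := by
  obtain ⟨r, hr⟩ := hι
  have hcount : (#{v | MajorityDisagrees n v} : ℝ) = 2 ^ (2 * r) - (2 * r).choose r := by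
    rw [eq_sub_iff_add_eq]
    exact_mod_cast card_majorityDisagrees_add_choose hr n
  rw [hcount, card_fun, card_bool, hr, Nat.add_sub_cancel, Nat.mul_div_cancel_left r two_pos,
    zpow_neg, zpow_natCast]
  push_cast
  field_simp
  ring

end Majority

/-- With N odd and S^(1),…,S^(N) independent uniformly random hypervectors and C their
coordinatewise majority, d_H(C, S^(n)) is distributed as (1/D)·Binomial(D, 1/2 − p(N))
with p(N) = 2^{−N}·binom(N−1,(N−1)/2); in particular
E[d_H(C, S^(n))] = 1/2 − p(N) < 1/2. -/
theorem stmt7 (N D : ℕ) (hN : Odd N) (hD : 0 < D) (n : Fin N) :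
    let p : ℝ := (2 : ℝ) ^ (-(N : ℤ)) * (Nat.choose (N - 1) ((N - 1) / 2) : ℝ)
    (∀ m : ℕ,
      ((Finset.univ.filter (fun f : Fin N → Fin D → Bool =>
          (Finset.univ.filter (fun i : Fin D =>
            maj (fun k j => pm (f k j)) i ≠ pm (f n i))).card = m)).card : ℝ)
        / (Fintype.card (Fin N → Fin D → Bool) : ℝ)
      = (D.choose m : ℝ) * (1/2 - p) ^ m * (1/2 + p) ^ (D - m))
    ∧ (∑ f : Fin N → Fin D → Bool,
          hdist (maj (fun k j => pm (f k j))) (fun i => pm (f n i)))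
        / (Fintype.card (Fin N → Fin D → Bool) : ℝ) = 1/2 - p
    ∧ 1/2 - p < 1/2 := by
  intro p
  have hq : (#{v | MajorityDisagrees n v} : ℝ) / card (Fin N → Bool) = 1 / 2 - p := by
    simpa only [Fintype.card_fin] using
      card_majorityDisagrees_div (ι := Fin N) (by simpa using hN) n
  have hcard : card (Fin N → Fin D → Bool) = card (Fin D → Fin N → Bool) :=
    card_congr (Equiv.piComm _)
  refine ⟨fun m => ?_, ?_, ?_⟩
  · rw [hcard, Finset.card_equiv (Equiv.piComm _)
      (t := {g | #{i | MajorityDisagrees n (g i)} = m})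
      (fun _ => by simp only [mem_filter, mem_univ, true_and]; rfl),
      card_filter_card_filter_apply_div, hq, Fintype.card_fin]
    ring
  · simp only [hdist, ← sum_div]
    rw [div_right_comm, hcard,
      ← Equiv.sum_comp (Equiv.piComm fun (_ : Fin D) (_ : Fin N) => Bool)]
    change (∑ g : Fin D → Fin N → Bool, (#{i | MajorityDisagrees n (g i)} : ℝ)) / _ / D = _
    rw [sum_card_filter_apply_div, hq, Fintype.card_fin]
    field_simp
  · have hc : 0 < (N - 1).choose ((N - 1) / 2) := Nat.choose_pos (Nat.div_le_self _ _)
    have : 0 < p := mul_pos (by positivity) (by exact_mod_cast hc)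
    linarith
end

section
/- Let N be odd, S^(1),…,S^(N),S* be independent uniformly random hypervectors in {-1,+1}^D and C their coordinatewise majority. Then for each fixed n, P(d_H(C, S^(n)) < d_H(C, S*)) → 1 as D → ∞. -/
/-!
Coordinatewise, the majority `C_i` disagrees with one of its own voters `S_i^(n)` with probability
strictly below `1/2` (flipping that voter's bit turns disagreements into agreements injectively,
and misses a configuration where the other `N - 1` voters tie), but with an independent `S*_i`
with probability exactly `1/2`. Hence `D * (d_H(C, S^(n)) - d_H(C, S*))` is a sum of `D` i.i.d.
bounded scores of negative mean, and the weak law of large numbers, proved by Chebyshev's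
inequality from the exact second moment of such a sum, makes it negative with probability
tending to `1`. Probabilities are proportions among all assignments of the `(N + 1) D` bits.
-/

open Filter

open Finset Topology

section WeakLaw

variable {α : Type*} [Fintype α]

lemma sum_sq_sum_comp_mul_card (g : α → ℝ) (hg : ∑ a, g a = 0) (D : ℕ) :
    (∑ ω : Fin D → α, (∑ i, g (ω i)) ^ 2) * Fintype.card α
      = D * Fintype.card α ^ D * ∑ a, g a ^ 2 := by
  induction D with
  | zero => simp
  | succ D ih =>
    have hsplit : ∑ ω : Fin (D + 1) → α, (∑ i, g (ω i)) ^ 2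
        = ∑ a, ∑ ω : Fin D → α, (g a + ∑ i, g (ω i)) ^ 2 := by
      rw [← (Fin.consEquiv fun _ => α).sum_comp, Fintype.sum_prod_type]
      simp [Fin.consEquiv, Fin.sum_univ_succ]
    have hexpand (a : α) : ∑ ω : Fin D → α, (g a + ∑ i, g (ω i)) ^ 2
        = Fintype.card α ^ D * g a ^ 2 + 2 * g a * ∑ ω : Fin D → α, ∑ i, g (ω i)
          + ∑ ω : Fin D → α, (∑ i, g (ω i)) ^ 2 := by
      simp only [add_sq, sum_add_distrib, ← mul_sum, sum_const, card_univ, Fintype.card_fun,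
        Fintype.card_fin, nsmul_eq_mul]
      push_cast
      ring
    rw [hsplit, sum_congr rfl fun a _ => hexpand a, sum_add_distrib, sum_add_distrib, ← mul_sum,
      ← sum_mul, ← mul_sum, hg, sum_const, card_univ, nsmul_eq_mul]
    push_cast
    linear_combination (Fintype.card α : ℝ) * ih

/-- Chebyshev's inequality for the centred scores `card α * f - ∑ f`, whose sums over `ω` are
at least `D * |∑ f|` whenever `∑ i, f (ω i)` is nonnegative. -/
lemma card_filter_sum_comp_nonneg_mul_le (f : α → ℝ) (hf : ∑ a, f a < 0) (D : ℕ) :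
    (#{ω : Fin D → α | 0 ≤ ∑ i, f (ω i)} : ℝ) * (D * (∑ a, f a) ^ 2 * Fintype.card α)
      ≤ Fintype.card α ^ D * ∑ a, (Fintype.card α * f a - ∑ b, f b) ^ 2 := by
  set A : ℝ := (Fintype.card α : ℝ)
  set g : α → ℝ := fun a => A * f a - ∑ b, f b
  have hg : ∑ a, g a = 0 := by simp [g, sum_sub_distrib, ← mul_sum, A]
  have hlarge : ∀ ω ∈ ({ω : Fin D → α | 0 ≤ ∑ i, f (ω i)} : Finset _),
      (D * ∑ a, f a) ^ 2 ≤ (∑ i, g (ω i)) ^ 2 := by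
    intro ω hω
    have hω : 0 ≤ ∑ i, f (ω i) := (mem_filter.mp hω).2
    have hsum : ∑ i, g (ω i) = A * ∑ i, f (ω i) - D * ∑ a, f a := by
      simp [g, sum_sub_distrib, ← mul_sum]
    have hA : 0 ≤ A := Nat.cast_nonneg _
    rw [hsum]
    exact sq_le_sq' (by nlinarith) (by nlinarith)
  have hchebyshev : (#{ω : Fin D → α | 0 ≤ ∑ i, f (ω i)} : ℝ) * (D * ∑ a, f a) ^ 2
      ≤ ∑ ω : Fin D → α, (∑ i, g (ω i)) ^ 2 := by
    rw [← nsmul_eq_mul]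
    exact (card_nsmul_le_sum _ _ _ hlarge).trans
      (sum_le_sum_of_subset_of_nonneg (filter_subset _ _) fun _ _ _ => sq_nonneg _)
  have hmoment := sum_sq_sum_comp_mul_card g hg D
  rcases (Nat.cast_nonneg D : (0 : ℝ) ≤ D).eq_or_lt with hD | hD
  · rw [← hD]; simp only [zero_mul, mul_zero]; positivity
  · refine le_of_mul_le_mul_left ?_ hD
    have hA : 0 ≤ A := Nat.cast_nonneg _
    nlinarith [mul_le_mul_of_nonneg_right hchebyshev hA]

theorem tendsto_card_filter_sum_neg_div_card (f : α → ℝ) (hf : ∑ a, f a < 0) :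
    Tendsto (fun D : ℕ => (#{ω : Fin D → α | ∑ i, f (ω i) < 0} : ℝ) / Fintype.card (Fin D → α))
      atTop (𝓝 1) := by
  set A : ℝ := (Fintype.card α : ℝ)
  have hA : 0 < A := by
    have : Nonempty α := by
      by_contra h
      simp [not_nonempty_iff.mp h] at hf
    exact Nat.cast_pos.mpr Fintype.card_pos
  have hf2 : 0 < (∑ a, f a) ^ 2 := by nlinarith
  set V := ∑ a, (A * f a - ∑ b, f b) ^ 2
  have hbad : Tendsto (fun D : ℕ => (#{ω : Fin D → α | 0 ≤ ∑ i, f (ω i)} : ℝ) / A ^ D)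
      atTop (𝓝 0) := by
    refine squeeze_zero' (Eventually.of_forall fun D => by positivity) ?_
      (tendsto_const_div_atTop_nhds_zero_nat (V / ((∑ a, f a) ^ 2 * A)))
    filter_upwards [eventually_gt_atTop 0] with D hD
    have := card_filter_sum_comp_nonneg_mul_le f hf D
    rw [div_le_div_iff₀ (by positivity) (by positivity), div_mul_eq_mul_div,
      le_div_iff₀ (by positivity)]
    linarith
  have hsplit (D : ℕ) : (#{ω : Fin D → α | ∑ i, f (ω i) < 0} : ℝ) / Fintype.card (Fin D → α)
      = 1 - (#{ω : Fin D → α | 0 ≤ ∑ i, f (ω i)} : ℝ) / A ^ D := by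
    have hcount :=
      card_filter_add_card_filter_not (s := univ) fun ω : Fin D → α => ∑ i, f (ω i) < 0
    simp only [not_lt, card_univ, Fintype.card_fun, Fintype.card_fin] at hcount
    rw [Fintype.card_fun, Fintype.card_fin, Nat.cast_pow, eq_sub_iff_add_eq, ← add_div,
      div_eq_one_iff_eq (by positivity)]
    exact_mod_cast hcount
  simpa only [hsplit, sub_zero] using hbad.const_sub 1

end WeakLaw

lemma sum_pm_eq_s8 {ι : Type*} (u : Finset ι) (s : ι → Bool) :
    ∑ k ∈ u, pm (s k) = 2 * #{k ∈ u | s k} - #u := by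
  have h (k : ι) : pm (s k) = 2 * (if s k then 1 else 0) - 1 := by cases s k <;> rfl
  simp only [h, sum_sub_distrib, ← mul_sum, sum_boole, sum_const, nsmul_eq_mul, mul_one]

lemma exists_sum_pm_eq_zero {ι : Type*} (u : Finset ι) (hu : Even #u) :
    ∃ s : ι → Bool, ∑ k ∈ u, pm (s k) = 0 := by
  classical
  obtain ⟨m, hm⟩ := hu
  obtain ⟨t, htu, htm⟩ := exists_subset_card_eq (show m ≤ #u by omega)
  refine ⟨fun k => decide (k ∈ t), ?_⟩
  rw [sum_pm_eq_s8]
  simp only [decide_eq_true_eq, filter_mem_eq_inter, inter_eq_right.mpr htu, htm, hm]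
  push_cast
  ring

section Majority

variable {N : ℕ}

/-- `maj` at a single coordinate, as a function of the column of `N` bits. -/
def majority (s : Fin N → Bool) : ℤ := if 0 < ∑ k, pm (s k) then 1 else -1

lemma majority_eq_pm_of_sum_erase_eq_zero {s : Fin N → Bool} {n : Fin N}
    (hs : ∑ k ∈ univ.erase n, pm (s k) = 0) : majority s = pm (s n) := by
  rw [majority, ← add_sum_erase _ _ (mem_univ n), hs]
  cases s n <;> rfl

lemma sum_erase_pm_update (s : Fin N → Bool) (n : Fin N) (b : Bool) :
    ∑ k ∈ univ.erase n, pm (Function.update s n b k) = ∑ k ∈ univ.erase n, pm (s k) :=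
  sum_congr rfl fun k hk => by rw [Function.update_of_ne (ne_of_mem_erase hk)]

lemma majority_update_not_of_ne {s : Fin N → Bool} {n : Fin N} (hs : majority s ≠ pm (s n)) :
    majority (Function.update s n (!s n)) = pm (!s n) := by
  unfold majority at hs ⊢
  rw [← add_sum_erase _ _ (mem_univ n)] at hs ⊢
  rw [sum_erase_pm_update, Function.update_self]
  generalize ∑ k ∈ univ.erase n, pm (s k) = T at hs ⊢
  generalize s n = b at hs ⊢
  cases b <;> simp only [pm, Bool.not_false, Bool.not_true, if_true, if_false,
    Bool.false_eq_true] at hs ⊢ <;> split_ifs at hs ⊢ <;> omega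

/-- Flipping the bit `s n` maps the columns whose majority disagrees with `s n` injectively to
columns whose majority agrees with it, and misses the flip of a tie column of the other bits. -/
lemma card_majority_ne_lt_card_majority_eq (hN : Odd N) (n : Fin N) :
    #{s : Fin N → Bool | majority s ≠ pm (s n)} < #{s : Fin N → Bool | majority s = pm (s n)} := by
  set flip : (Fin N → Bool) → Fin N → Bool := fun s => Function.update s n (!s n)
  have hflip : Function.Involutive flip := fun s => by simp [flip]
  obtain ⟨w, hw⟩ := exists_sum_pm_eq_zero (univ.erase n) (by
    rw [card_erase_of_mem (mem_univ n), card_univ, Fintype.card_fin]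
    exact hN.tsub_odd odd_one)
  have hflip_w : flip w ∈ ({s | majority s = pm (s n)} : Finset _) :=
    mem_filter.mpr ⟨mem_univ _, majority_eq_pm_of_sum_erase_eq_zero
      ((sum_erase_pm_update w n _).trans hw)⟩
  calc #{s : Fin N → Bool | majority s ≠ pm (s n)}
      = #(({s : Fin N → Bool | majority s ≠ pm (s n)} : Finset _).image flip) :=
        (card_image_of_injective _ hflip.injective).symm
    _ ≤ #(({s : Fin N → Bool | majority s = pm (s n)} : Finset _).erase (flip w)) := by
        refine card_le_card fun x hx => ?_
        obtain ⟨s, hs, rfl⟩ := mem_image.mp hx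
        have hs : majority s ≠ pm (s n) := (mem_filter.mp hs).2
        refine mem_erase.mpr ⟨fun h => hs ?_, mem_filter.mpr ⟨mem_univ _, ?_⟩⟩
        · rw [hflip.injective h]
          exact majority_eq_pm_of_sum_erase_eq_zero hw
        · simpa [flip] using majority_update_not_of_ne hs
    _ < #{s : Fin N → Bool | majority s = pm (s n)} := card_erase_lt_of_mem hflip_w

/-- The contribution of one coordinate to `D * (d_H(C, S^(n)) - d_H(C, S*))`, as a function of
the column `a.1` of the bits of `S^(1), …, S^(N)` and the bit `a.2` of `S*`. -/
def disagreementGap (n : Fin N) (a : (Fin N → Bool) × Bool) : ℝ :=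
  (if majority a.1 ≠ pm (a.1 n) then 1 else 0) - (if majority a.1 ≠ pm a.2 then 1 else 0)

lemma sum_disagreementGap_neg (hN : Odd N) (n : Fin N) : ∑ a, disagreementGap n a < 0 := by
  have hcolumn (s : Fin N → Bool) : ∑ b, disagreementGap n (s, b)
      = (if majority s ≠ pm (s n) then 1 else 0) - (if majority s = pm (s n) then 1 else 0) := by
    have hmaj : majority s = 1 ∨ majority s = -1 := by unfold majority; split_ifs <;> simp
    simp only [Fintype.sum_bool, disagreementGap]
    rcases hmaj with h | h <;> by_cases hb : s n <;> norm_num [h, hb, pm]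
  rw [Fintype.sum_prod_type, sum_congr rfl fun s _ => hcolumn s, sum_sub_distrib, sum_boole,
    sum_boole, sub_neg, Nat.cast_lt]
  exact card_majority_ne_lt_card_majority_eq hN n

end Majority

lemma hdist_lt_hdist_iff {D : ℕ} (A B B' : Fin D → ℤ) :
    hdist A B < hdist A B' ↔
      ∑ i, ((if A i ≠ B i then 1 else 0) - (if A i ≠ B' i then 1 else 0) : ℝ) < 0 := by
  rw [sum_sub_distrib, sum_boole, sum_boole, sub_neg, hdist, hdist]
  rcases Nat.eq_zero_or_pos D with rfl | hD
  · simp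
  · exact div_lt_div_iff_of_pos_right (Nat.cast_pos.mpr hD)

def columnsEquiv (N D : ℕ) :
    (Fin N → Fin D → Bool) × (Fin D → Bool) ≃ (Fin D → (Fin N → Bool) × Bool) where
  toFun p i := (fun k => p.1 k i, p.2 i)
  invFun ω := (fun k i => (ω i).1 k, fun i => (ω i).2)

/-- With N odd, S^(1),…,S^(N), S* independent uniformly random hypervectors in {-1,+1}^D
and C their coordinatewise majority, for each fixed n,
P(d_H(C, S^(n)) < d_H(C, S*)) → 1 as D → ∞. -/
theorem stmt8 (N : ℕ) (hN : Odd N) (n : Fin N) :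
    Tendsto (fun D : ℕ =>
      ((Finset.univ.filter (fun p : (Fin N → Fin D → Bool) × (Fin D → Bool) =>
          hdist (maj (fun k j => pm (p.1 k j))) (fun i => pm (p.1 n i))
            < hdist (maj (fun k j => pm (p.1 k j))) (fun i => pm (p.2 i)))).card : ℝ)
        / (Fintype.card ((Fin N → Fin D → Bool) × (Fin D → Bool)) : ℝ))
      atTop (nhds 1) := by
  refine (tendsto_card_filter_sum_neg_div_card _ (sum_disagreementGap_neg hN n)).congr
    fun D => ?_
  rw [Fintype.card_congr (columnsEquiv N D), card_equiv (columnsEquiv N D) fun p => ?_]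
  simp only [mem_filter, mem_univ, true_and]
  exact hdist_lt_hdist_iff _ _ _
end
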